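/- Let H₁, H₂, U, Y be complex Hilbert spaces and let M̂ = [[A₁₁, A₁₂, B₁], [A₂₁, A₂₂, B₂], [C₁, C₂, D]] : H₁ ⊕ H₂ ⊕ U → H₁ ⊕ H₂ ⊕ Y be a contraction. Set H = H₁ ⊕ H₂, A₁ = [[A₁₁, 0], [0, A₂₂]] ∈ B(H), A₂ = [[0, A₁₂], [A₂₁, 0]] ∈ B(H), B = (1/√2)·[B₁; B₂] ∈ B(U,H), and C = (1/√2)·[C₁ C₂] ∈ B(H,Y). Then the block operator M = [[A₁, A₂, B], [A₂, A₁, B], [C, C, D]] : H ⊕ H ⊕ U → H ⊕ H ⊕ Y is a contraction. -/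
import Mathlib


noncomputable section

open ContinuousLinearMap

variable {H₁ H₂ U Y : Type*}
  [NormedAddCommGroup H₁] [InnerProductSpace ℂ H₁] [CompleteSpace H₁]
  [NormedAddCommGroup H₂] [InnerProductSpace ℂ H₂] [CompleteSpace H₂]
  [NormedAddCommGroup U] [InnerProductSpace ℂ U] [CompleteSpace U]
  [NormedAddCommGroup Y] [InnerProductSpace ℂ Y] [CompleteSpace Y]

/-- The colligation `M̂ = [[A₁₁,A₁₂,B₁],[A₂₁,A₂₂,B₂],[C₁,C₂,D]] : H₁ ⊕ H₂ ⊕ U → H₁ ⊕ H₂ ⊕ Y`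
is a contraction (with respect to the Hilbert space direct sum norms). -/
def HatColligationContractive (A₁₁ : H₁ →L[ℂ] H₁) (A₁₂ : H₂ →L[ℂ] H₁) (A₂₁ : H₁ →L[ℂ] H₂)
    (A₂₂ : H₂ →L[ℂ] H₂) (B₁ : U →L[ℂ] H₁) (B₂ : U →L[ℂ] H₂) (C₁ : H₁ →L[ℂ] Y)
    (C₂ : H₂ →L[ℂ] Y) (D : U →L[ℂ] Y) : Prop :=
  ∀ (h₁ : H₁) (h₂ : H₂) (u : U),
    ‖A₁₁ h₁ + A₁₂ h₂ + B₁ u‖ ^ 2 + ‖A₂₁ h₁ + A₂₂ h₂ + B₂ u‖ ^ 2 +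
        ‖C₁ h₁ + C₂ h₂ + D u‖ ^ 2 ≤
      ‖h₁‖ ^ 2 + ‖h₂‖ ^ 2 + ‖u‖ ^ 2

/-- The colligation `M = [[A₁,A₂,B],[A₂,A₁,B],[C,C,D]] : H ⊕ H ⊕ U → H ⊕ H ⊕ Y` is a
contraction, where `H = H₁ ⊕ H₂` (all direct sums carry the Hilbert space norm). -/
def SymColligationContractive (A₁ A₂ : (H₁ × H₂) →L[ℂ] (H₁ × H₂))
    (B : U →L[ℂ] (H₁ × H₂)) (C : (H₁ × H₂) →L[ℂ] Y) (D : U →L[ℂ] Y) : Prop :=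
  ∀ (x y : H₁ × H₂) (u : U),
    ‖(A₁ x + A₂ y + B u).1‖ ^ 2 + ‖(A₁ x + A₂ y + B u).2‖ ^ 2 +
        ‖(A₂ x + A₁ y + B u).1‖ ^ 2 + ‖(A₂ x + A₁ y + B u).2‖ ^ 2 +
        ‖C x + C y + D u‖ ^ 2 ≤
      ‖x.1‖ ^ 2 + ‖x.2‖ ^ 2 + ‖y.1‖ ^ 2 + ‖y.2‖ ^ 2 + ‖u‖ ^ 2

theorem symmetrized_colligation_contractive (A₁₁ : H₁ →L[ℂ] H₁) (A₁₂ : H₂ →L[ℂ] H₁)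
    (A₂₁ : H₁ →L[ℂ] H₂) (A₂₂ : H₂ →L[ℂ] H₂) (B₁ : U →L[ℂ] H₁) (B₂ : U →L[ℂ] H₂)
    (C₁ : H₁ →L[ℂ] Y) (C₂ : H₂ →L[ℂ] Y) (D : U →L[ℂ] Y)
    (hM : HatColligationContractive A₁₁ A₁₂ A₂₁ A₂₂ B₁ B₂ C₁ C₂ D) :
    SymColligationContractive
      (A₁₁.prodMap A₂₂)
      ((A₁₂.comp (ContinuousLinearMap.snd ℂ H₁ H₂)).prod
        (A₂₁.comp (ContinuousLinearMap.fst ℂ H₁ H₂)))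
      ((Real.sqrt 2 : ℂ)⁻¹ • (B₁.prod B₂))
      ((Real.sqrt 2 : ℂ)⁻¹ • (C₁.coprod C₂)) D := by
  intro x y u
  simp only [ContinuousLinearMap.add_apply, coe_smul', Pi.smul_apply,
    ContinuousLinearMap.coe_prodMap', Prod.map_fst, Prod.map_snd, Prod.map_apply,
    ContinuousLinearMap.prod_apply,
    ContinuousLinearMap.coprod_apply, ContinuousLinearMap.comp_apply,
    ContinuousLinearMap.coe_fst', ContinuousLinearMap.coe_snd',
    Prod.fst_add, Prod.snd_add, Prod.smul_fst, Prod.smul_snd, Prod.mk_add_mk, Prod.smul_mk]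
  set c : ℂ := ((Real.sqrt 2 : ℝ) : ℂ)⁻¹ with hc
  have hs2 : (Real.sqrt 2) * (Real.sqrt 2) = 2 := Real.mul_self_sqrt (by norm_num)
  have hc2 : c * c = (2:ℂ)⁻¹ := by
    rw [hc, ← mul_inv, ← Complex.ofReal_mul, hs2]
    norm_num
  have hcn : ‖c‖ ^ 2 = 2⁻¹ := by
    rw [hc, norm_inv, Complex.norm_real, Real.norm_eq_abs,
      abs_of_nonneg (Real.sqrt_nonneg 2), inv_pow, sq, hs2]
  set a := A₁₁ x.1 + A₁₂ y.2 + c • B₁ u with ha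
  set b := A₁₂ x.2 + A₁₁ y.1 + c • B₁ u with hb
  set d := A₂₂ x.2 + A₂₁ y.1 + c • B₂ u with hd
  set e := A₂₁ x.1 + A₂₂ y.2 + c • B₂ u with he
  set f := c • (C₁ x.1 + C₂ x.2) + c • (C₁ y.1 + C₂ y.2) + D u with hf
  have h1 := hM (c • (x.1 + y.1)) (c • (x.2 + y.2)) u
  have h2 := hM (c • (x.1 - y.1)) (-(c • (x.2 - y.2))) 0
  have k1 : A₁₁ (c • (x.1 + y.1)) + A₁₂ (c • (x.2 + y.2)) + B₁ u = c • (a + b) := by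
    simp only [ha, hb, map_add, map_smul, smul_add, smul_smul, hc2]
    module
  have k2 : A₂₁ (c • (x.1 + y.1)) + A₂₂ (c • (x.2 + y.2)) + B₂ u = c • (d + e) := by
    simp only [hd, he, map_add, map_smul, smul_add, smul_smul, hc2]
    module
  have k3 : C₁ (c • (x.1 + y.1)) + C₂ (c • (x.2 + y.2)) + D u = f := by
    simp only [hf, map_add, map_smul, smul_add, smul_smul, hc2]
    module
  have k4 : A₁₁ (c • (x.1 - y.1)) + A₁₂ (-(c • (x.2 - y.2))) + B₁ (0:U) = c • (a - b) := by
    simp only [ha, hb, map_add, map_smul, map_neg, map_sub, map_zero, smul_sub, smul_add,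
      smul_smul, hc2]
    module
  have k5 : A₂₁ (c • (x.1 - y.1)) + A₂₂ (-(c • (x.2 - y.2))) + B₂ (0:U) = c • (e - d) := by
    simp only [hd, he, map_add, map_smul, map_neg, map_sub, map_zero, smul_sub, smul_add,
      smul_smul, hc2]
    module
  rw [k1, k2, k3] at h1
  rw [k4, k5] at h2
  simp only [norm_smul, norm_neg, mul_pow, hcn, map_zero, norm_zero] at h1 h2
  have p1 : ‖a + b‖ ^ 2 + ‖a - b‖ ^ 2 = 2 * ‖a‖ ^ 2 + 2 * ‖b‖ ^ 2 := by
    have := parallelogram_law_with_norm ℂ a b; linarith [this]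
  have p2 : ‖d + e‖ ^ 2 + ‖e - d‖ ^ 2 = 2 * ‖d‖ ^ 2 + 2 * ‖e‖ ^ 2 := by
    have := parallelogram_law_with_norm ℂ d e
    rw [norm_sub_rev] at this; linarith [this]
  have p3 : ‖x.1 + y.1‖ ^ 2 + ‖x.1 - y.1‖ ^ 2 = 2 * ‖x.1‖ ^ 2 + 2 * ‖y.1‖ ^ 2 := by
    have := parallelogram_law_with_norm ℂ x.1 y.1; linarith [this]
  have p4 : ‖x.2 + y.2‖ ^ 2 + ‖x.2 - y.2‖ ^ 2 = 2 * ‖x.2‖ ^ 2 + 2 * ‖y.2‖ ^ 2 := by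
    have := parallelogram_law_with_norm ℂ x.2 y.2; linarith [this]
  linarith [h1, h2, p1, p2, p3, p4,
    sq_nonneg ‖C₁ (c • (x.1 - y.1)) + C₂ (-(c • (x.2 - y.2))) + (0:Y)‖]
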